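/- For ε ∈ (0,1) and integers j ≥ 1 define w_j^{ε}(β) = exp(−β/2^{j+1})·(ε^{3^j} − ε^{3^{j+2}}), θ(ε,j) = (1 − 9ε^{8·3^j})/(1 − ε^{8·3^j}), and β_j^{ε} = 6^j · 2(−log ε) · (log 3 / log 2) · θ(ε,j). Then for every δ > 0 there exists ε_δ ∈ (0,1) such that for every ε with 0 < ε < ε_δ and every integer j₀ ≥ 1, w_{j₀}^{ε}(β_{j₀}^{ε}) > (1−δ) · Σ_{j=1}^{∞} w_j^{ε}(β_{j₀}^{ε}). Equivalently, if (C_j)_{j≥1} is a measurable partition of a measurable space and ℙ_β is a probability measure with ℙ_β(C_j) proportional to w_j^{ε}(β), then ℙ_{β_{j₀}^{ε}}(C_{j₀}) > 1 − δ for every j₀ ≥ 1, provided 0 < ε < ε_δ. -/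

import Mathlib

noncomputable section

/-- The weight `w_j^ε(β) = exp(−β/2^{j+1})·(ε^{3^j} − ε^{3^{j+2}})`. -/
def wfun (ε : ℝ) (j : ℕ) (β : ℝ) : ℝ :=
  Real.exp (-β / 2 ^ (j + 1)) * (ε ^ (3 ^ j) - ε ^ (3 ^ (j + 2)))

/-- `θ(ε,j) = (1 − 9 ε^{8·3^j})/(1 − ε^{8·3^j})`. -/
def thetafun (ε : ℝ) (j : ℕ) : ℝ :=
  (1 - 9 * ε ^ (8 * 3 ^ j)) / (1 - ε ^ (8 * 3 ^ j))

/-- `β_j^ε = 6^j · 2(−log ε) · (log 3/log 2) · θ(ε,j)`. -/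
def betafun (ε : ℝ) (j : ℕ) : ℝ :=
  6 ^ j * (2 * (-Real.log ε)) * (Real.log 3 / Real.log 2) * thetafun ε j

/-!
Put `a = (log 3 / log 2) θ(ε, j₀) ∈ [1, 2]` (for `ε ≤ 1/25`), so that `β_{j₀}^ε = -2 log ε · 6^{j₀} a`.
Then `w_i(β_{j₀}^ε) = ε^{E(i)} (1 - ε^{8·3^i})` with `E(i) = 6^{j₀} a / 2^i + 3^i`, and the exponent `E` is
minimal at `i = j₀` with a gap `E(i) - E(j₀) ≥ i` elsewhere. Hence `w_i ≤ 2 w_{j₀} ε^i` for `i ≠ j₀`, and all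
the other weights together are at most `2ε/(1-ε) · w_{j₀}`.
-/

open Real

lemma three_halves_le_log_three_div_log_two : 3 / 2 ≤ log 3 / log 2 := by
  rw [le_div_iff₀ (log_pos one_lt_two)]
  have h := log_le_log (by norm_num) (by norm_num : (2 : ℝ) ^ 3 ≤ 3 ^ 2)
  rw [log_pow, log_pow] at h
  push_cast at h
  linarith

lemma log_three_div_log_two_le_two : log 3 / log 2 ≤ 2 := by
  rw [div_le_iff₀ (log_pos one_lt_two)]
  have h := log_le_log (by norm_num) (by norm_num : (3 : ℝ) ≤ 2 ^ 2)
  rw [log_pow] at h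
  push_cast at h
  linarith

lemma one_add_two_mul_le_three_pow (n : ℕ) : 1 + 2 * (n : ℝ) ≤ 3 ^ n := by
  have := one_add_mul_le_pow (by norm_num : (-2 : ℝ) ≤ 2) n
  norm_num at this
  linarith

def weightExponent (b : ℝ) (i : ℕ) : ℝ := b / 2 ^ i + 3 ^ i

lemma le_weightExponent_sub_of_lt {a : ℝ} (ha : 1 ≤ a) {i m : ℕ} (h : i < m) :
    (i : ℝ) ≤ weightExponent (6 ^ m * a) i - weightExponent (6 ^ m * a) m := by
  obtain ⟨n, hn, rfl⟩ : ∃ n, 1 ≤ n ∧ m = i + n := ⟨m - i, by omega, by omega⟩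
  have hgap : weightExponent (6 ^ (i + n) * a) i - weightExponent (6 ^ (i + n) * a) (i + n)
      = 3 ^ i * (1 + 3 ^ n * (a * (2 ^ n - 1) - 1)) := by
    rw [weightExponent, weightExponent, show (6 : ℝ) = 2 * 3 by norm_num, mul_pow, pow_add,
      pow_add]
    field_simp
    ring
  have h2n : (2 : ℝ) ≤ 2 ^ n := le_self_pow₀ one_le_two (by omega)
  have hfac : 1 ≤ 1 + 3 ^ n * (a * (2 ^ n - 1) - 1) := by
    have : 0 ≤ a * (2 ^ n - 1) - 1 := by nlinarith
    have : (0 : ℝ) ≤ 3 ^ n * (a * (2 ^ n - 1) - 1) := by positivity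
    linarith
  rw [hgap]
  nlinarith [one_add_two_mul_le_three_pow i]

lemma le_weightExponent_sub_of_gt {a : ℝ} (ha0 : 0 ≤ a) (ha2 : a ≤ 2) {i m : ℕ} (h : m < i) :
    (i : ℝ) ≤ weightExponent (6 ^ m * a) i - weightExponent (6 ^ m * a) m := by
  obtain ⟨n, hn, rfl⟩ : ∃ n, 1 ≤ n ∧ i = m + n := ⟨i - m, by omega, by omega⟩
  have hgap : weightExponent (6 ^ m * a) (m + n) - weightExponent (6 ^ m * a) m
      = 3 ^ m * (3 ^ n - 1 - a * (1 - (1 / 2) ^ n)) := by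
    rw [weightExponent, weightExponent, show (6 : ℝ) = 2 * 3 by norm_num, mul_pow, pow_add,
      pow_add, div_pow]
    field_simp
    ring
  have hhalf : 1 - (1 / 2 : ℝ) ^ n ≤ n / 2 := by
    have := one_add_mul_le_pow (by norm_num : (-2 : ℝ) ≤ -1 / 2) n
    norm_num at this
    linarith
  have hhalf0 : 0 ≤ 1 - (1 / 2 : ℝ) ^ n :=
    sub_nonneg.2 (pow_le_one₀ (by norm_num) (by norm_num))
  have hX : (n : ℝ) ≤ 3 ^ n - 1 - a * (1 - (1 / 2) ^ n) := by
    nlinarith [one_add_two_mul_le_three_pow n]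
  have hn1 : (1 : ℝ) ≤ n := by exact_mod_cast hn
  rw [hgap]
  push_cast
  nlinarith [one_add_two_mul_le_three_pow m]

lemma le_weightExponent_sub_of_ne {a : ℝ} (ha1 : 1 ≤ a) (ha2 : a ≤ 2) {i m : ℕ} (h : i ≠ m) :
    (i : ℝ) ≤ weightExponent (6 ^ m * a) i - weightExponent (6 ^ m * a) m :=
  h.lt_or_gt.elim (le_weightExponent_sub_of_lt ha1) (le_weightExponent_sub_of_gt (by linarith) ha2)

lemma tsum_le_add_tsum_of_le_of_ne {ι : Type*} {f g : ι → ℝ} (m : ι) (hf : ∀ n, 0 ≤ f n)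
    (hg0 : ∀ n, 0 ≤ g n) (hg : Summable g) (hfg : ∀ n, n ≠ m → f n ≤ g n) :
    ∑' n, f n ≤ f m + ∑' n, g n := by
  classical
  have hsingle := hasSum_ite_eq m (f m)
  have hle : ∀ n, f n ≤ g n + if n = m then f m else 0 := by
    intro n
    split_ifs with h
    · subst h
      linarith [hg0 n]
    · simpa using hfg n h
  have hs := hg.add hsingle.summable
  calc ∑' n, f n ≤ ∑' n, (g n + if n = m then f m else 0) :=
        Summable.tsum_le_tsum hle (hs.of_nonneg_of_le hf hle) hs
    _ = f m + ∑' n, g n := by rw [hg.tsum_add hsingle.summable, hsingle.tsum_eq, add_comm]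

section Weights

variable {ε : ℝ}

lemma thetafun_le_one (hε0 : 0 ≤ ε) (hε1 : ε < 1) (j : ℕ) : thetafun ε j ≤ 1 := by
  have hx : ε ^ (8 * 3 ^ j) < 1 := pow_lt_one₀ hε0 hε1 (by positivity)
  rw [thetafun, div_le_one (by linarith)]
  linarith [pow_nonneg hε0 (8 * 3 ^ j)]

lemma two_thirds_le_thetafun (hε0 : 0 ≤ ε) (hε : ε ≤ 1 / 25) (j : ℕ) :
    2 / 3 ≤ thetafun ε j := by
  have hx : ε ^ (8 * 3 ^ j) ≤ ε := pow_le_of_le_one hε0 (by linarith) (by positivity)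
  rw [thetafun, le_div_iff₀ (by linarith)]
  linarith

lemma betafun_eq_neg_two_mul_log (j : ℕ) :
    betafun ε j = -2 * log ε * (6 ^ j * (log 3 / log 2 * thetafun ε j)) := by
  rw [betafun]
  ring

lemma wfun_pos (hε0 : 0 < ε) (hε1 : ε < 1) (i : ℕ) (β : ℝ) : 0 < wfun ε i β :=
  mul_pos (exp_pos _) <| sub_pos.2 <|
    pow_lt_pow_right_of_lt_one₀ hε0 hε1 (Nat.pow_lt_pow_right (by norm_num) (by omega))

lemma wfun_neg_two_mul_log (hε : 0 < ε) (i : ℕ) (b : ℝ) :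
    wfun ε i (-2 * log ε * b) = ε ^ weightExponent b i * (1 - ε ^ (8 * 3 ^ i)) := by
  have hexp : exp (-(-2 * log ε * b) / 2 ^ (i + 1)) = ε ^ (b / 2 ^ i) := by
    rw [rpow_def_of_pos hε, pow_succ]
    congr 1
    field_simp
  have hpow : ε ^ ((3 : ℝ) ^ i) = ε ^ 3 ^ i := by
    exact_mod_cast rpow_natCast ε (3 ^ i)
  rw [wfun, weightExponent, hexp, rpow_add hε, hpow,
    show 3 ^ (i + 2) = 3 ^ i + 8 * 3 ^ i by ring, pow_add]
  ring

lemma wfun_betafun_le (hε0 : 0 < ε) (hε : ε ≤ 1 / 25) {i m : ℕ} (h : i ≠ m) :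
    wfun ε i (betafun ε m) ≤ 2 * wfun ε m (betafun ε m) * ε ^ i := by
  set a := log 3 / log 2 * thetafun ε m
  have hθ := two_thirds_le_thetafun hε0.le hε m
  have ha1 : 1 ≤ a := by nlinarith [three_halves_le_log_three_div_log_two]
  have ha2 : a ≤ 2 := by
    nlinarith [log_three_div_log_two_le_two, thetafun_le_one hε0.le (by linarith) m]
  have hxi : 0 ≤ ε ^ (8 * 3 ^ i) := by positivity
  have hxm : ε ^ (8 * 3 ^ m) ≤ ε := pow_le_of_le_one hε0.le (by linarith) (by positivity)
  have hpow : ε ^ weightExponent (6 ^ m * a) i ≤ ε ^ weightExponent (6 ^ m * a) m * ε ^ i := by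
    rw [← rpow_natCast ε i, ← rpow_add hε0]
    exact rpow_le_rpow_of_exponent_ge hε0 (by linarith)
      (by linarith [le_weightExponent_sub_of_ne ha1 ha2 h])
  have hpos : 0 < ε ^ weightExponent (6 ^ m * a) m * ε ^ i := by positivity
  rw [betafun_eq_neg_two_mul_log, wfun_neg_two_mul_log hε0, wfun_neg_two_mul_log hε0]
  nlinarith [rpow_nonneg hε0.le (weightExponent (6 ^ m * a) i)]

lemma tsum_wfun_betafun_le (hε0 : 0 < ε) (hε : ε ≤ 1 / 25) (m : ℕ) :
    ∑' j : ℕ, wfun ε (j + 1) (betafun ε (m + 1))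
      ≤ wfun ε (m + 1) (betafun ε (m + 1)) * (1 + 2 * ε / (1 - ε)) := by
  set w := wfun ε (m + 1) (betafun ε (m + 1))
  have hw : 0 < w := wfun_pos hε0 (by linarith) _ _
  calc ∑' j : ℕ, wfun ε (j + 1) (betafun ε (m + 1))
      ≤ w + ∑' j : ℕ, 2 * w * ε * ε ^ j := by
        refine tsum_le_add_tsum_of_le_of_ne m (fun j => (wfun_pos hε0 (by linarith) _ _).le)
          (fun j => by positivity) ((summable_geometric_of_lt_one hε0.le (by linarith)).mul_left _)
          fun j hj => ?_
        simpa only [pow_succ', mul_assoc] using wfun_betafun_le hε0 hε (by omega : j + 1 ≠ m + 1)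
    _ = w * (1 + 2 * ε / (1 - ε)) := by
        rw [tsum_mul_left, tsum_geometric_of_lt_one hε0.le (by linarith)]
        field_simp

end Weights

/-- for every `δ > 0` there is `ε_δ ∈ (0,1)` such that for all
`0 < ε < ε_δ` and every `j₀ ≥ 1`, the weight at `j₀` dominates: `w_{j₀}^ε(β_{j₀}^ε)
 > (1−δ)·Σ_{j≥1} w_j^ε(β_{j₀}^ε)`; i.e. any probability measure on a partition
`(C_j)_{j≥1}` with `ℙ_β(C_j) ∝ w_j^ε(β)` satisfies `ℙ_{β_{j₀}^ε}(C_{j₀}) > 1 − δ`. -/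
theorem weight_concentration (δ : ℝ) (hδ : 0 < δ) :
    ∃ εδ : ℝ, 0 < εδ ∧ εδ < 1 ∧ ∀ ε : ℝ, 0 < ε → ε < εδ →
      ∀ j₀ : ℕ, 1 ≤ j₀ →
        (1 - δ) * (∑' j : ℕ, wfun ε (j + 1) (betafun ε j₀)) <
          wfun ε j₀ (betafun ε j₀) := by
  refine ⟨min (1 / 25) (δ / 8), by positivity, (min_le_left _ _).trans_lt (by norm_num), ?_⟩
  intro ε hε0 hεδ j₀ hj₀
  have hε : ε ≤ 1 / 25 := hεδ.le.trans (min_le_left _ _)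
  have hε8 : ε < δ / 8 := hεδ.trans_le (min_le_right _ _)
  obtain ⟨m, rfl⟩ : ∃ m, j₀ = m + 1 := ⟨j₀ - 1, by omega⟩
  have hsum := tsum_wfun_betafun_le hε0 hε m
  have hw := wfun_pos hε0 (by linarith) (m + 1) (betafun ε (m + 1))
  have hS0 : 0 ≤ ∑' j : ℕ, wfun ε (j + 1) (betafun ε (m + 1)) :=
    tsum_nonneg fun j => (wfun_pos hε0 (by linarith) _ _).le
  have hη0 : 0 ≤ 2 * ε / (1 - ε) := div_nonneg (by linarith) (by linarith)
  have hη : 2 * ε / (1 - ε) < δ := by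
    rw [div_lt_iff₀ (by linarith)]
    nlinarith
  rcases le_or_gt 1 δ with hδ1 | hδ1
  · nlinarith
  · nlinarith [mul_le_mul_of_nonneg_left hsum (sub_nonneg.2 hδ1.le), mul_pos hw hδ]
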